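/- Let U ⊆ ℝ² be open with coordinates (u,v) and let ρ, Λ : U → ℝ be smooth and positive, satisfying the curvature-one condition Δ₀(log ρ − log Λ) = −2ρ/Λ on U (this says that the conformal metric III = (ρ/Λ)(du²+dv²) has Gaussian curvature 1). Then at each point of U the equation Λ Δ₀ log Λ = ρ + 1/ρ holds if and only if ρ² + Λ Δ₀ρ = 1 + (Λ/ρ)(ρ_u² + ρ_v²), i.e. if and only if ρ satisfies the Ribaucour equation ρ² + ρΔρ = 1 + |∇ρ|² with Laplacian Δ = (Λ/ρ)Δ₀ and gradient norm |∇ρ|² = (Λ/ρ)(ρ_u²+ρ_v²) taken with respect to the metric (ρ/Λ)(du²+dv²). -/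

import Mathlib

/-- Partial derivative in the `u`-direction of a function on `ℝ²`. -/
noncomputable def pu (f : ℝ × ℝ → ℝ) (p : ℝ × ℝ) : ℝ := fderiv ℝ f p (1, 0)

/-- Partial derivative in the `v`-direction of a function on `ℝ²`. -/
noncomputable def pv (f : ℝ × ℝ → ℝ) (p : ℝ × ℝ) : ℝ := fderiv ℝ f p (0, 1)

/-- Flat Laplacian `Δ₀f = f_uu + f_vv` on `ℝ²`. -/
noncomputable def lap2 (f : ℝ × ℝ → ℝ) (p : ℝ × ℝ) : ℝ := pu (pu f) p + pv (pv f) p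

/-! Subtracting the curvature-one condition gives `Δ₀ log Λ = Δ₀ log ρ + 2ρ/Λ`, and
`Δ₀ log ρ = Δ₀ρ/ρ - (ρ_u² + ρ_v²)/ρ²`. Substituting, `Λ Δ₀ log Λ - (ρ + 1/ρ)` equals
`(ρ² + Λ Δ₀ρ - 1 - (Λ/ρ)(ρ_u² + ρ_v²))/ρ`, so one side vanishes iff the other does. -/

open Topology

section DirectionalDerivative

variable {E : Type*} [NormedAddCommGroup E] [NormedSpace ℝ E] {f g : E → ℝ} {p : E}

lemma ContDiffAt.differentiableAt_fderiv_apply (hf : ContDiffAt ℝ 2 f p) (w : E) :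
    DifferentiableAt ℝ (fun q => fderiv ℝ f q w) p :=
  ((hf.fderiv_right (m := 1) le_rfl).clm_apply contDiffAt_const).differentiableAt one_ne_zero

lemma fderiv_log_apply (hf : DifferentiableAt ℝ f p) (hfp : f p ≠ 0) (w : E) :
    fderiv ℝ (fun q => Real.log (f q)) p w = (f p)⁻¹ * fderiv ℝ f p w := by
  rw [fderiv.log hf hfp, smul_apply, smul_eq_mul]

lemma fderiv_fderiv_log_apply (hf : ContDiffAt ℝ 2 f p) (hfp : f p ≠ 0) (w : E) :
    fderiv ℝ (fun q => fderiv ℝ (fun r => Real.log (f r)) q w) p w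
      = fderiv ℝ (fun q => fderiv ℝ f q w) p w / f p - (fderiv ℝ f p w / f p) ^ 2 := by
  have hlog : (fun q => fderiv ℝ (fun r => Real.log (f r)) q w)
      =ᶠ[𝓝 p] fun q => (f q)⁻¹ * fderiv ℝ f q w := by
    filter_upwards [hf.eventually (by simp), hf.continuousAt.eventually_ne hfp] with q hfq hq
    exact fderiv_log_apply (hfq.differentiableAt two_ne_zero) hq w
  have hinv : HasFDerivAt (fun q => (f q)⁻¹) (-(f p ^ 2)⁻¹ • fderiv ℝ f p) p :=
    (hasDerivAt_inv hfp).comp_hasFDerivAt p (hf.differentiableAt two_ne_zero).hasFDerivAt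
  rw [hlog.fderiv_eq,
    (hinv.fun_mul (hf.differentiableAt_fderiv_apply w).hasFDerivAt).fderiv]
  simp only [add_apply, smul_apply, smul_eq_mul]
  field_simp
  ring

lemma fderiv_fderiv_sub_apply (hf : ContDiffAt ℝ 2 f p) (hg : ContDiffAt ℝ 2 g p) (w : E) :
    fderiv ℝ (fun q => fderiv ℝ (fun r => f r - g r) q w) p w
      = fderiv ℝ (fun q => fderiv ℝ f q w) p w - fderiv ℝ (fun q => fderiv ℝ g q w) p w := by
  have hsub : (fun q => fderiv ℝ (fun r => f r - g r) q w)
      =ᶠ[𝓝 p] fun q => fderiv ℝ f q w - fderiv ℝ g q w := by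
    filter_upwards [hf.eventually (by simp), hg.eventually (by simp)] with q hfq hgq
    rw [fderiv_fun_sub (hfq.differentiableAt two_ne_zero) (hgq.differentiableAt two_ne_zero)]
    rfl
  rw [hsub.fderiv_eq, fderiv_fun_sub (hf.differentiableAt_fderiv_apply w)
    (hg.differentiableAt_fderiv_apply w)]
  rfl

end DirectionalDerivative

section FlatLaplacian

variable {f g : ℝ × ℝ → ℝ} {p : ℝ × ℝ}

lemma lap2_eq_fderiv_fderiv (f : ℝ × ℝ → ℝ) (p : ℝ × ℝ) :
    lap2 f p = fderiv ℝ (fun q => fderiv ℝ f q (1, 0)) p (1, 0)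
      + fderiv ℝ (fun q => fderiv ℝ f q (0, 1)) p (0, 1) :=
  rfl

lemma lap2_sub (hf : ContDiffAt ℝ 2 f p) (hg : ContDiffAt ℝ 2 g p) :
    lap2 (fun q => f q - g q) p = lap2 f p - lap2 g p := by
  simp only [lap2_eq_fderiv_fderiv, fderiv_fderiv_sub_apply hf hg]
  ring

lemma lap2_log (hf : ContDiffAt ℝ 2 f p) (hfp : f p ≠ 0) :
    lap2 (fun q => Real.log (f q)) p
      = lap2 f p / f p - (pu f p ^ 2 + pv f p ^ 2) / f p ^ 2 := by
  simp only [lap2_eq_fderiv_fderiv, fderiv_fderiv_log_apply hf hfp, pu, pv]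
  ring

end FlatLaplacian

lemma mul_eq_add_inv_iff_sq_add_mul_eq {ρ Λ L G : ℝ} (hρ : ρ ≠ 0) (hΛ : Λ ≠ 0) :
    Λ * (L / ρ - G / ρ ^ 2 + 2 * ρ / Λ) = ρ + 1 / ρ ↔ ρ ^ 2 + Λ * L = 1 + Λ / ρ * G := by
  have hdiff : Λ * (L / ρ - G / ρ ^ 2 + 2 * ρ / Λ) - (ρ + 1 / ρ)
      = (ρ ^ 2 + Λ * L - (1 + Λ / ρ * G)) / ρ := by
    field_simp
    ring
  rw [← sub_eq_zero, hdiff, div_eq_zero_iff, or_iff_left hρ, sub_eq_zero]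

theorem gauss_equation_iff_ribaucour_equation
    (U : Set (ℝ × ℝ)) (hU : IsOpen U)
    (ρ Lam : ℝ × ℝ → ℝ)
    (hρ : ContDiffOn ℝ (⊤ : ℕ∞) ρ U) (hLam : ContDiffOn ℝ (⊤ : ℕ∞) Lam U)
    (hρpos : ∀ p ∈ U, 0 < ρ p) (hLampos : ∀ p ∈ U, 0 < Lam p)
    (hcurv : ∀ p ∈ U,
      lap2 (fun q => Real.log (ρ q) - Real.log (Lam q)) p = -(2 * ρ p / Lam p)) :
    ∀ p ∈ U,
      (Lam p * lap2 (fun q => Real.log (Lam q)) p = ρ p + 1 / ρ p) ↔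
      (ρ p ^ 2 + Lam p * lap2 ρ p = 1 + (Lam p / ρ p) * (pu ρ p ^ 2 + pv ρ p ^ 2)) := by
  intro p hp
  have hC2 : ∀ f : ℝ × ℝ → ℝ, ContDiffOn ℝ (⊤ : ℕ∞) f U → ContDiffAt ℝ 2 f p := fun f hf =>
    (hf.contDiffAt (hU.mem_nhds hp)).of_le (WithTop.coe_le_coe.mpr le_top)
  have hρp := hC2 ρ hρ
  have hΛp := hC2 Lam hLam
  have hρ0 := (hρpos p hp).ne'
  have hΛ0 := (hLampos p hp).ne'
  have hcurvp := hcurv p hp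
  rw [lap2_sub (hρp.log hρ0) (hΛp.log hΛ0), lap2_log hρp hρ0] at hcurvp
  have hlapΛ : lap2 (fun q => Real.log (Lam q)) p
      = lap2 ρ p / ρ p - (pu ρ p ^ 2 + pv ρ p ^ 2) / ρ p ^ 2 + 2 * ρ p / Lam p := by
    linarith
  rw [hlapΛ]
  exact mul_eq_add_inv_iff_sq_add_mul_eq hρ0 hΛ0
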